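/- Let ε₁ ∈ [0,1]. Suppose there exists a bounded Borel measurable function v : 𝒳̂ → ℝ such that: v(x) ≤ 1 − ε₁ for all x ∈ 𝒳₀; v(x) ≥ 𝔼^∞[v(φ_π^{x}(1))] for all x ∈ 𝒳; v(x) ≥ 1 for all x ∈ 𝒳̂ ∖ 𝒳; and v(x) ≥ 0 for all x ∈ 𝒳̂. Then for every x₀ ∈ 𝒳₀, ℙ^∞(∃k ∈ ℕ: φ_π^{x₀}(k) ∈ 𝒳̂ ∖ 𝒳 and ∀i ∈ ℕ with i ≤ k−1: φ_π^{x₀}(i) ∈ 𝒳) ≤ 1 − ε₁, and consequently ℙ^∞(∀k ∈ ℕ: φ_π^{x₀}(k) ∈ 𝒳) ≥ ε₁. -/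

import Mathlib

open MeasureTheory Filter Topology

noncomputable section

/-- Trajectory of the discrete-time system `x(l+1) = f(x(l), d(l))` under the
disturbance sequence `π`, starting from `x0`. -/
def traj {n m : ℕ} (f : (Fin n → ℝ) → (Fin m → ℝ) → (Fin n → ℝ))
    (x0 : Fin n → ℝ) (π : ℕ → Fin m → ℝ) : ℕ → Fin n → ℝ
  | 0 => x0
  | k + 1 => f (traj f x0 π k) (π k)

section Aux
variable {n m : ℕ} {f : (Fin n → ℝ) → (Fin m → ℝ) → (Fin n → ℝ)}

lemma traj_succ (x : Fin n → ℝ) (π : ℕ → Fin m → ℝ) (k : ℕ) :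
    traj f x π (k + 1) = f (traj f x π k) (π k) := rfl

lemma traj_shift (x : Fin n → ℝ) (π : ℕ → Fin m → ℝ) (k : ℕ) :
    traj f x π (k + 1) = traj f (f x (π 0)) (fun i => π (i + 1)) k := by
  induction k with
  | zero => rfl
  | succ k ih => rw [traj_succ, ih]; rfl

lemma measurable_traj (hf : Measurable fun p : (Fin n → ℝ) × (Fin m → ℝ) => f p.1 p.2)
    {α : Type*} [MeasurableSpace α] {g : α → Fin n → ℝ} {h : α → ℕ → Fin m → ℝ}
    (hg : Measurable g) (hh : Measurable h) (k : ℕ) :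
    Measurable fun a => traj f (g a) (h a) k := by
  induction k with
  | zero => exact hg
  | succ k ih =>
    have : (fun a => traj f (g a) (h a) (k + 1))
        = fun a => f (traj f (g a) (h a) k) (h a k) := rfl
    rw [this]
    exact hf.comp (ih.prodMk ((measurable_pi_apply k).comp hh))
end Aux

/-- Proposition 3: barrier certificate on `𝒳̂` certifies a lower bound
on the liveness probability. -/
theorem statement_3 {n m : ℕ}
    (f : (Fin n → ℝ) → (Fin m → ℝ) → (Fin n → ℝ))
    (hf : Measurable fun p : (Fin n → ℝ) × (Fin m → ℝ) => f p.1 p.2)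
    (D : Set (Fin m → ℝ)) (hD : MeasurableSet D)
    (μ : Measure (Fin m → ℝ)) [IsProbabilityMeasure μ] (hμD : μ D = 1)
    (Pinf : Measure (ℕ → Fin m → ℝ)) [IsProbabilityMeasure Pinf]
    (hPinf : ∀ (s : Finset ℕ) (B : ℕ → Set (Fin m → ℝ)), (∀ i, MeasurableSet (B i)) →
      Pinf {π : ℕ → Fin m → ℝ | ∀ i ∈ s, π i ∈ B i} = ∏ i ∈ s, μ (B i))
    (X X0 Xhat : Set (Fin n → ℝ))
    (hX : MeasurableSet X) (hX0 : MeasurableSet X0) (hXhat : MeasurableSet Xhat)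
    (hX0X : X0 ⊆ X) (hXXhat : X ⊆ Xhat)
    (hreach : ∀ x ∈ X, ∀ d ∈ D, f x d ∈ Xhat)
    (ε₁ : ℝ) (hε₁ : ε₁ ∈ Set.Icc (0 : ℝ) 1)
    (v : (Fin n → ℝ) → ℝ) (hv : Measurable v)
    (hvb : ∃ C, ∀ x ∈ Xhat, |v x| ≤ C)
    (h1 : ∀ x ∈ X0, v x ≤ 1 - ε₁)
    (h2 : ∀ x ∈ X, (∫ d in D, v (f x d) ∂μ) ≤ v x)
    (h3 : ∀ x ∈ Xhat \ X, 1 ≤ v x)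
    (h4 : ∀ x ∈ Xhat, 0 ≤ v x) :
    ∀ x0 ∈ X0,
      (Pinf {π : ℕ → Fin m → ℝ |
          ∃ k : ℕ, traj f x0 π k ∈ Xhat \ X ∧ ∀ i < k, traj f x0 π i ∈ X}).toReal
        ≤ 1 - ε₁ ∧
      ε₁ ≤ (Pinf {π : ℕ → Fin m → ℝ | ∀ k : ℕ, traj f x0 π k ∈ X}).toReal := by
  classical
  -- notation
  set Shift : (ℕ → Fin m → ℝ) → (ℕ → Fin m → ℝ) := fun π i => π (i + 1) with hShiftDef
  have hshift : Measurable Shift := measurable_pi_iff.2 fun i => measurable_pi_apply (i + 1)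
  set T : (ℕ → Fin m → ℝ) → (Fin m → ℝ) × (ℕ → Fin m → ℝ) := fun π => (π 0, Shift π)
    with hTdef
  have hT : Measurable T := (measurable_pi_apply 0).prodMk hshift
  have hD0 : ∀ᵐ d ∂μ, d ∈ D := by
    have : μ Dᶜ = 0 := by rw [prob_compl_eq_one_sub hD, hμD]; simp
    exact (ae_iff.2 (by exact this))
  -- Step A : map T Pinf = μ.prod Pinf
  have hmap : Measure.map T Pinf = μ.prod Pinf := by
    refine (Measure.prod_eq (μ := μ) (ν := Pinf) fun B C hB hC => ?_).symm
    rw [Measure.map_apply hT (hB.prod hC)]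
    have hpre : T ⁻¹' (B ×ˢ C)
        = Shift ⁻¹' C ∩ {π : ℕ → Fin m → ℝ | π 0 ∈ B} := by
      ext π; simp [hTdef, Set.mem_prod, and_comm]
    rw [hpre]
    have hE : MeasurableSet {π : ℕ → Fin m → ℝ | π 0 ∈ B} := (measurable_pi_apply 0) hB
    set ρ : Measure (ℕ → Fin m → ℝ) :=
      Measure.map Shift (Pinf.restrict {π : ℕ → Fin m → ℝ | π 0 ∈ B}) with hρ
    have hρfin : IsFiniteMeasure ρ := by
      constructor
      rw [hρ, Measure.map_apply hshift MeasurableSet.univ]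
      exact (measure_mono (Set.subset_univ _)).trans_lt (measure_lt_top _ _)
    have hEmeas : Pinf {π : ℕ → Fin m → ℝ | π 0 ∈ B} = μ B := by
      simpa using hPinf {0} (fun _ => B) (fun _ => hB)
    have key : ρ = (μ B) • Pinf := by
      refine ext_of_generate_finite _ generateFrom_squareCylinders.symm
        (isPiSystem_squareCylinders (fun i => ?_)
          (fun i => (MeasurableSet.univ : MeasurableSet (Set.univ : Set (Fin m → ℝ)))))
        ?_ ?_
      · intro s hs t ht _
        simp only [Set.mem_setOf_eq] at *
        exact hs.inter ht
      · rintro S ⟨t, u, hu, rfl⟩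
        simp only [Set.mem_univ_pi, Set.mem_setOf_eq] at hu
        have hSm : MeasurableSet ((↑t : Set ℕ).pi u) :=
          MeasurableSet.pi (Finset.countable_toSet _) (fun i _ => hu i)
        rw [hρ, Measure.map_apply hshift hSm, Measure.restrict_apply (hshift hSm)]
        have hset : Shift ⁻¹' ((↑t : Set ℕ).pi u) ∩ {π : ℕ → Fin m → ℝ | π 0 ∈ B}
            = {π : ℕ → Fin m → ℝ | ∀ j ∈ insert 0 (t.image (· + 1)),
                π j ∈ (if j = 0 then B else u (j - 1))} := by
          ext π
          simp only [Set.mem_inter_iff, Set.mem_preimage, Set.mem_pi, Set.mem_setOf_eq,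
            Finset.mem_insert, Finset.mem_image, Finset.mem_coe, hShiftDef]
          constructor
          · rintro ⟨h1', h0⟩ j hj
            rcases hj with rfl | ⟨i, hi, rfl⟩
            · simpa using h0
            · simpa using h1' i hi
          · intro h
            refine ⟨fun i hi => ?_, ?_⟩
            · simpa using h (i + 1) (Or.inr ⟨i, hi, rfl⟩)
            · simpa using h 0 (Or.inl rfl)
        rw [hset, hPinf _ _ (fun j => by
          by_cases hj : j = 0 <;> simp [hj, hB, hu])]
        rw [Finset.prod_insert (by simp)]
        have hprod : ∏ j ∈ t.image (· + 1), μ (if j = 0 then B else u (j - 1))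
            = ∏ i ∈ t, μ (u i) := by
          rw [Finset.prod_image (fun a _ b _ h => by omega)]
          exact Finset.prod_congr rfl fun i _ => by simp
        have hPit : Pinf ((↑t : Set ℕ).pi u) = ∏ i ∈ t, μ (u i) := by
          rw [show ((↑t : Set ℕ).pi u) = {π : ℕ → Fin m → ℝ | ∀ i ∈ t, π i ∈ u i} by
            ext π; simp [Set.mem_pi]]
          exact hPinf t u hu
        rw [hprod]
        simp [Measure.smul_apply, hPit]
      · rw [hρ, Measure.map_apply hshift MeasurableSet.univ]
        simp [Measure.restrict_apply, hEmeas]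
    calc Pinf (Shift ⁻¹' C ∩ {π : ℕ → Fin m → ℝ | π 0 ∈ B})
        = ρ C := by rw [hρ, Measure.map_apply hshift hC, Measure.restrict_apply (hshift hC)]
      _ = μ B * Pinf C := by rw [key]; simp
  -- exit sets
  set Ex : (Fin n → ℝ) → ℕ → Set (ℕ → Fin m → ℝ) := fun y k =>
    {π | ∃ j < k, traj f y π j ∈ Xhat \ X ∧ ∀ i < j, traj f y π i ∈ X} with hExDef
  have hExMeas : ∀ y k, MeasurableSet (Ex y k) := by
    intro y k
    have : Ex y k = ⋃ j ∈ Set.Iio k, ((fun π => traj f y π j) ⁻¹' (Xhat \ X)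
        ∩ ⋂ i ∈ Set.Iio j, (fun π => traj f y π i) ⁻¹' X) := by
      ext π
      simp only [hExDef, Set.mem_iUnion, Set.mem_iInter, Set.mem_inter_iff,
        Set.mem_preimage, Set.mem_setOf_eq, Set.mem_Iio, Set.mem_diff]
      tauto
    rw [this]
    refine MeasurableSet.biUnion (Set.to_countable _) fun j _ => ?_
    refine (measurable_traj hf measurable_const measurable_id j (hXhat.diff hX)).inter ?_
    exact MeasurableSet.biInter (Set.to_countable _) fun i _ =>
      measurable_traj hf measurable_const measurable_id i hX
  set S : (Fin n → ℝ) → ℕ → Set ((Fin m → ℝ) × (ℕ → Fin m → ℝ)) := fun y k =>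
    {p | p.2 ∈ Ex (f y p.1) k} with hSDef
  have hSMeas : ∀ y k, MeasurableSet (S y k) := by
    intro y k
    have hg : Measurable fun p : (Fin m → ℝ) × (ℕ → Fin m → ℝ) => f y p.1 :=
      hf.comp (measurable_const.prodMk measurable_fst)
    have : S y k = ⋃ j ∈ Set.Iio k,
        ((fun p : (Fin m → ℝ) × (ℕ → Fin m → ℝ) => traj f (f y p.1) p.2 j) ⁻¹' (Xhat \ X)
        ∩ ⋂ i ∈ Set.Iio j,
          (fun p : (Fin m → ℝ) × (ℕ → Fin m → ℝ) => traj f (f y p.1) p.2 i) ⁻¹' X) := by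
      ext p
      simp only [hSDef, hExDef, Set.mem_iUnion, Set.mem_iInter, Set.mem_inter_iff,
        Set.mem_preimage, Set.mem_setOf_eq, Set.mem_Iio, Set.mem_diff]
      tauto
    rw [this]
    refine MeasurableSet.biUnion (Set.to_countable _) fun j _ => ?_
    refine (measurable_traj hf hg measurable_snd j (hXhat.diff hX)).inter ?_
    exact MeasurableSet.biInter (Set.to_countable _) fun i _ =>
      measurable_traj hf hg measurable_snd i hX
  -- key induction
  have key : ∀ k, ∀ y ∈ Xhat, Pinf (Ex y k) ≤ ENNReal.ofReal (v y) := by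
    intro k
    induction k with
    | zero =>
      intro y hy
      have : Ex y 0 = ∅ := by ext π; simp [hExDef]
      rw [this]; simp
    | succ k ih =>
      intro y hy
      by_cases hyX : y ∈ X
      · have hset : Ex y (k + 1) = T ⁻¹' (S y k) := by
          ext π
          simp only [hExDef, hSDef, hTdef, Set.mem_setOf_eq, Set.mem_preimage]
          constructor
          · rintro ⟨j, hj, hjX, hij⟩
            match j with
            | 0 => exact absurd hyX hjX.2
            | j + 1 =>
              refine ⟨j, by omega, ?_, ?_⟩
              · rw [← traj_shift]; exact hjX
              · intro i hi; rw [← traj_shift]; exact hij (i + 1) (by omega)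
          · rintro ⟨j, hj, hjX, hij⟩
            refine ⟨j + 1, by omega, ?_, ?_⟩
            · rw [traj_shift]; exact hjX
            · intro i hi
              match i with
              | 0 => exact hyX
              | i + 1 => rw [traj_shift]; exact hij i (by omega)
        have hvmeas : Measurable fun d => v (f y d) :=
          hv.comp (hf.comp (measurable_const.prodMk measurable_id))
        have hint : Integrable (fun d => v (f y d)) μ := by
          obtain ⟨C, hC⟩ := hvb
          refine ⟨hvmeas.aestronglyMeasurable, HasFiniteIntegral.of_bounded (C := C) ?_⟩
          exact hD0.mono fun d hd => by
            simpa [Real.norm_eq_abs] using hC _ (hreach y hyX d hd)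
        have hpos : 0 ≤ᵐ[μ] fun d => v (f y d) :=
          hD0.mono fun d hd => h4 _ (hreach y hyX d hd)
        have hrestr : μ.restrict D = μ := Measure.restrict_eq_self_of_ae_mem hD0
        calc Pinf (Ex y (k + 1)) = (μ.prod Pinf) (S y k) := by
              rw [hset, ← hmap, Measure.map_apply hT (hSMeas y k)]
          _ = ∫⁻ d, Pinf (Prod.mk d ⁻¹' (S y k)) ∂μ := Measure.prod_apply (hSMeas y k)
          _ = ∫⁻ d, Pinf (Ex (f y d) k) ∂μ := by
              refine lintegral_congr fun d => ?_
              congr 1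
          _ ≤ ∫⁻ d, ENNReal.ofReal (v (f y d)) ∂μ :=
              lintegral_mono_ae (hD0.mono fun d hd => ih (f y d) (hreach y hyX d hd))
          _ = ENNReal.ofReal (∫ d, v (f y d) ∂μ) :=
              (ofReal_integral_eq_lintegral_ofReal hint hpos).symm
          _ ≤ ENNReal.ofReal (v y) := by
              refine ENNReal.ofReal_le_ofReal ?_
              have := h2 y hyX
              rwa [hrestr] at this
      · have h1y := h3 y ⟨hy, hyX⟩
        calc Pinf (Ex y (k + 1)) ≤ 1 := prob_le_one
          _ ≤ ENNReal.ofReal (v y) := ENNReal.one_le_ofReal.mpr h1y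
  -- conclusion
  intro x0 hx0
  have hx0X : x0 ∈ X := hX0X hx0
  have hx0hat : x0 ∈ Xhat := hXXhat hx0X
  have hTargetEq : {π : ℕ → Fin m → ℝ |
      ∃ k : ℕ, traj f x0 π k ∈ Xhat \ X ∧ ∀ i < k, traj f x0 π i ∈ X} = ⋃ k, Ex x0 k := by
    ext π
    simp only [Set.mem_setOf_eq, Set.mem_iUnion, hExDef]
    constructor
    · rintro ⟨k, hk1, hk2⟩; exact ⟨k + 1, k, by omega, hk1, hk2⟩
    · rintro ⟨K, j, hj, hk1, hk2⟩; exact ⟨j, hk1, hk2⟩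
  have hmono : Monotone (Ex x0) := by
    intro a b hab π hπ
    obtain ⟨j, hj, hrest⟩ := hπ
    exact ⟨j, lt_of_lt_of_le hj hab, hrest⟩
  have hbound : Pinf {π : ℕ → Fin m → ℝ |
      ∃ k : ℕ, traj f x0 π k ∈ Xhat \ X ∧ ∀ i < k, traj f x0 π i ∈ X}
      ≤ ENNReal.ofReal (1 - ε₁) := by
    rw [hTargetEq, hmono.directed_le.measure_iUnion]
    exact iSup_le fun k => (key k x0 hx0hat).trans (ENNReal.ofReal_le_ofReal (h1 x0 hx0))
  constructor
  · exact ENNReal.toReal_le_of_le_ofReal (by linarith [hε₁.2]) hbound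
  · -- part 2
    have hStayEq : {π : ℕ → Fin m → ℝ | ∀ k : ℕ, traj f x0 π k ∈ X}
        = ⋂ k, (fun π => traj f x0 π k) ⁻¹' X := by
      ext π; simp
    have hStayM : MeasurableSet {π : ℕ → Fin m → ℝ | ∀ k : ℕ, traj f x0 π k ∈ X} := by
      rw [hStayEq]
      exact MeasurableSet.iInter fun k => measurable_traj hf measurable_const measurable_id k hX
    have hnull : Pinf (⋃ i, {π : ℕ → Fin m → ℝ | π i ∉ D}) = 0 := by
      refine measure_iUnion_null fun i => ?_
      have hDi : Pinf {π : ℕ → Fin m → ℝ | π i ∈ D} = 1 := by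
        simpa [hμD] using hPinf {i} (fun _ => D) (fun _ => hD)
      have : {π : ℕ → Fin m → ℝ | π i ∉ D} = {π : ℕ → Fin m → ℝ | π i ∈ D}ᶜ := rfl
      rw [this, prob_compl_eq_one_sub (show MeasurableSet {π : ℕ → Fin m → ℝ | π i ∈ D} from (measurable_pi_apply i) hD), hDi]
      simp
    have hsub : {π : ℕ → Fin m → ℝ | ∀ k : ℕ, traj f x0 π k ∈ X}ᶜ ⊆
        {π : ℕ → Fin m → ℝ |
          ∃ k : ℕ, traj f x0 π k ∈ Xhat \ X ∧ ∀ i < k, traj f x0 π i ∈ X}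
        ∪ ⋃ i, {π : ℕ → Fin m → ℝ | π i ∉ D} := by
      intro π hπ
      by_cases hAll : ∀ i, π i ∈ D
      · refine Set.mem_union_left _ ?_
        simp only [Set.mem_compl_iff, Set.mem_setOf_eq, not_forall] at hπ
        obtain ⟨k0, hk0⟩ := hπ
        have hex : ∃ k, traj f x0 π k ∉ X := ⟨k0, hk0⟩
        have hmin : ∀ i < Nat.find hex, traj f x0 π i ∈ X :=
          fun i hi => of_not_not (Nat.find_min hex hi)
        have hpos : Nat.find hex ≠ 0 := by
          intro h
          exact Nat.find_spec hex (by rw [h]; exact hx0X)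
        refine ⟨Nat.find hex, ⟨?_, Nat.find_spec hex⟩, hmin⟩
        obtain ⟨k', hk'⟩ : ∃ k', Nat.find hex = k' + 1 := ⟨Nat.find hex - 1, by omega⟩
        rw [hk', traj_succ]
        exact hreach _ (hmin k' (by omega)) _ (hAll k')
      · obtain ⟨i, hi⟩ := not_forall.mp hAll
        exact Set.mem_union_right _ (Set.mem_iUnion.2 ⟨i, hi⟩)
    have hcompl : Pinf {π : ℕ → Fin m → ℝ | ∀ k : ℕ, traj f x0 π k ∈ X}ᶜ
        ≤ ENNReal.ofReal (1 - ε₁) := by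
      calc Pinf {π : ℕ → Fin m → ℝ | ∀ k : ℕ, traj f x0 π k ∈ X}ᶜ
          ≤ Pinf ({π : ℕ → Fin m → ℝ |
              ∃ k : ℕ, traj f x0 π k ∈ Xhat \ X ∧ ∀ i < k, traj f x0 π i ∈ X}
            ∪ ⋃ i, {π : ℕ → Fin m → ℝ | π i ∉ D}) := measure_mono hsub
        _ ≤ Pinf {π : ℕ → Fin m → ℝ |
              ∃ k : ℕ, traj f x0 π k ∈ Xhat \ X ∧ ∀ i < k, traj f x0 π i ∈ X}
            + Pinf (⋃ i, {π : ℕ → Fin m → ℝ | π i ∉ D}) := measure_union_le _ _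
        _ ≤ ENNReal.ofReal (1 - ε₁) := by rw [hnull, add_zero]; exact hbound
    have hb : (Pinf {π : ℕ → Fin m → ℝ | ∀ k : ℕ, traj f x0 π k ∈ X}ᶜ).toReal ≤ 1 - ε₁ :=
      ENNReal.toReal_le_of_le_ofReal (by linarith [hε₁.2]) hcompl
    have hsum : (Pinf {π : ℕ → Fin m → ℝ | ∀ k : ℕ, traj f x0 π k ∈ X}ᶜ).toReal
        = 1 - (Pinf {π : ℕ → Fin m → ℝ | ∀ k : ℕ, traj f x0 π k ∈ X}).toReal := by
      rw [prob_compl_eq_one_sub hStayM,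
        ENNReal.toReal_sub_of_le prob_le_one ENNReal.one_ne_top]
      simp
    linarith
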